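/- Let u : ℕ → A and v : ℕ → A be infinite words all of whose palindromic factors have length at most p. Let m, m' ≥ 0 and let ℓ ≥ p. Suppose d_u(m+i) = d_v(m'+i) for all 0 ≤ i < p, and u[m+i] = v[m'+i] for all 0 ≤ i ≤ ℓ. Then d_u(m+ℓ) = d_v(m'+ℓ). (In other words, d_u(n) for n ≥ m + p is uniquely determined by d_u(m), …, d_u(m+p−1) and by the factor u[m]⋯u[n], without knowledge of PPL_u(m).) -/

import Mathlib

/-!
A shortest factorization of a prefix ends with a nonempty palindrome, so
`PPL u n = 1 + min {PPL u s : s < n, u[s..n-1] a palindrome}`. When palindromic factors have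
length at most `p`, this recurrence at `n = m + i` with `i ≥ p` only looks back at positions
`m + j`, `j < i`, and only reads letters from `u[m..n-1]`. Hence `PPL u (m + i) - PPL u m` is
determined, by strong induction on `i`, by its values for `i ≤ p`, which are sums of the given
PPL-differences, and by the factor `u[m..m+ℓ]`.
-/

/-- Prefix `u[0..n-1]` of the infinite word `u`. -/
def wordPrefix {A : Type*} (u : ℕ → A) (n : ℕ) : List A :=
  List.ofFn (fun i : Fin n => u i)

/-- Factor `u[i..i+ℓ-1]` of the infinite word `u`. -/
def wordFactor {A : Type*} (u : ℕ → A) (i ℓ : ℕ) : List A :=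
  List.ofFn (fun j : Fin ℓ => u (i + j))

/-- A palindrome is a word equal to its reversal. -/
def IsPalindrome {A : Type*} (w : List A) : Prop := w.reverse = w

/-- `w` is a concatenation of `k` nonempty palindromes. -/
def IsPalConcat {A : Type*} (w : List A) (k : ℕ) : Prop :=
  ∃ ps : List (List A), ps.length = k ∧ (∀ p ∈ ps, p ≠ [] ∧ IsPalindrome p) ∧ ps.flatten = w

/-- Prefix palindromic length: the least number of nonempty palindromes whose
concatenation is the prefix of length `n` of `u` (`PPL u 0 = 0`). -/
noncomputable def PPL {A : Type*} (u : ℕ → A) (n : ℕ) : ℕ :=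
  sInf {k | IsPalConcat (wordPrefix u n) k}

/-- The PPL-difference sequence `d_u(n) = PPL_u(n+1) - PPL_u(n)`. -/
noncomputable def PPLdiff {A : Type*} (u : ℕ → A) (n : ℕ) : ℤ :=
  (PPL u (n + 1) : ℤ) - (PPL u n : ℤ)

section IsPalConcat

variable {A : Type*}

theorem isPalConcat_length (w : List A) : IsPalConcat w w.length :=
  ⟨w.map ([·]), by simp, by simp [IsPalindrome], List.flatMap_singleton' w⟩

theorem IsPalConcat.append {w q : List A} {k : ℕ} (hw : IsPalConcat w k) (hq : q ≠ [])
    (hpal : IsPalindrome q) : IsPalConcat (w ++ q) (k + 1) := by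
  obtain ⟨ps, rfl, hps, rfl⟩ := hw
  refine ⟨ps ++ [q], by simp, fun r hr => ?_, by simp⟩
  rcases List.mem_append.mp hr with hr | hr
  · exact hps r hr
  · exact List.mem_singleton.mp hr ▸ ⟨hq, hpal⟩

theorem IsPalConcat.exists_append {w : List A} {k : ℕ} (hw : IsPalConcat w (k + 1)) :
    ∃ w' q, w = w' ++ q ∧ IsPalConcat w' k ∧ q ≠ [] ∧ IsPalindrome q := by
  obtain ⟨ps, hlen, hps, rfl⟩ := hw
  obtain ⟨ps', q, rfl⟩ := (List.eq_nil_or_concat ps).resolve_left (by rintro rfl; simp at hlen)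
  simp only [List.concat_eq_append, List.mem_append, List.mem_singleton] at hlen hps
  obtain ⟨hq, hqpal⟩ := hps q (.inr rfl)
  exact ⟨ps'.flatten, q, by simp, ⟨ps', by simpa using hlen, fun r hr => hps r (.inl hr), rfl⟩,
    hq, hqpal⟩

end IsPalConcat

section Words

variable {A : Type*} (u : ℕ → A)

@[simp]
theorem wordPrefix_length (n : ℕ) : (wordPrefix u n).length = n := by
  simp [wordPrefix]

@[simp]
theorem wordFactor_length (s t : ℕ) : (wordFactor u s t).length = t := by
  simp [wordFactor]

theorem wordPrefix_add (s t : ℕ) : wordPrefix u (s + t) = wordPrefix u s ++ wordFactor u s t := by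
  simp only [wordPrefix, wordFactor, List.ofFn_add]
  rfl

theorem wordFactor_add_eq_of_agree {v : ℕ → A} {m m' i : ℕ}
    (hword : ∀ j < i, u (m + j) = v (m' + j)) {s t : ℕ} (hst : s + t ≤ i) :
    wordFactor u (m + s) t = wordFactor v (m' + s) t := by
  simp only [wordFactor, Nat.add_assoc]
  congr 1
  funext j
  exact hword _ (by omega)

end Words

section PPL

variable {A : Type*} (u : ℕ → A)

theorem isPalConcat_PPL (n : ℕ) : IsPalConcat (wordPrefix u n) (PPL u n) :=
  Nat.sInf_mem (s := {k | IsPalConcat (wordPrefix u n) k})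
    ⟨n, by simpa using isPalConcat_length (wordPrefix u n)⟩

theorem PPL_le_of_isPalConcat {n k : ℕ} (h : IsPalConcat (wordPrefix u n) k) : PPL u n ≤ k :=
  Nat.sInf_le h

theorem PPL_add_le_of_isPalindrome {s t : ℕ} (ht : 1 ≤ t)
    (hpal : IsPalindrome (wordFactor u s t)) : PPL u (s + t) ≤ PPL u s + 1 := by
  apply PPL_le_of_isPalConcat
  rw [wordPrefix_add]
  exact (isPalConcat_PPL u s).append (by simp [← List.length_pos_iff]; omega) hpal

theorem exists_PPL_eq_add_one {n : ℕ} (hn : 1 ≤ n) :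
    ∃ s t, s + t = n ∧ 1 ≤ t ∧ IsPalindrome (wordFactor u s t) ∧ PPL u n = PPL u s + 1 := by
  obtain ⟨k, hk⟩ : ∃ k, PPL u n = k + 1 := by
    refine Nat.exists_eq_add_one.mpr (Nat.pos_of_ne_zero fun h0 => ?_)
    obtain ⟨ps, hlen, -, hflat⟩ := isPalConcat_PPL u n
    rw [h0, List.length_eq_zero_iff] at hlen
    have := congrArg List.length hflat
    simp only [hlen, List.flatten_nil, List.length_nil, wordPrefix_length] at this
    omega
  obtain ⟨w', q, hsplit, hw', hq, hpal⟩ := (hk ▸ isPalConcat_PPL u n).exists_append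
  have hlen : w'.length + q.length = n := by simpa using (congrArg List.length hsplit).symm
  rw [← hlen, wordPrefix_add] at hsplit
  obtain ⟨hw'eq, hqeq⟩ := List.append_inj hsplit (by simp)
  rw [← hw'eq] at hw'
  rw [← hqeq] at hpal
  have hq : 1 ≤ q.length := List.length_pos_iff.mpr hq
  have hle := PPL_le_of_isPalConcat u hw'
  have hge := PPL_add_le_of_isPalindrome u hq hpal
  rw [hlen] at hge
  exact ⟨_, _, hlen, hq, hpal, by omega⟩

/- The last palindrome of a shortest factorization of `u[0..m+i-1]` has length at most `p ≤ i`,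
so it lies in the common window and also ends a factorization of `v[0..m'+i-1]`. -/
theorem PPL_sub_le_of_agree {p : ℕ}
    (hu : ∀ i ℓ : ℕ, 1 ≤ ℓ → IsPalindrome (wordFactor u i ℓ) → ℓ ≤ p)
    {v : ℕ → A} {m m' i : ℕ} (hi : 0 < i) (hpi : p ≤ i) (hword : ∀ j < i, u (m + j) = v (m' + j))
    (hPPL : ∀ j < i, (PPL u (m + j) : ℤ) - PPL u m = (PPL v (m' + j) : ℤ) - PPL v m') :
    (PPL v (m' + i) : ℤ) - PPL v m' ≤ (PPL u (m + i) : ℤ) - PPL u m := by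
  obtain ⟨s, t, hst, ht, hpal, heq⟩ := exists_PPL_eq_add_one u (n := m + i) (by omega)
  have htp := hu s t ht hpal
  obtain ⟨j, rfl⟩ : ∃ j, s = m + j := ⟨s - m, by omega⟩
  have hfac := wordFactor_add_eq_of_agree u hword (s := j) (t := t) (by omega)
  have hv := PPL_add_le_of_isPalindrome v ht (hfac ▸ hpal)
  rw [show m' + j + t = m' + i by omega] at hv
  have := hPPL j (by omega)
  omega

end PPL

theorem ppl_diff_determined_general {A : Type*} (u v : ℕ → A) (p : ℕ)
    (hu : ∀ i ℓ : ℕ, 1 ≤ ℓ → IsPalindrome (wordFactor u i ℓ) → ℓ ≤ p)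
    (hv : ∀ i ℓ : ℕ, 1 ≤ ℓ → IsPalindrome (wordFactor v i ℓ) → ℓ ≤ p)
    (m m' ℓ : ℕ)
    (hd : ∀ i : ℕ, i < p → PPLdiff u (m + i) = PPLdiff v (m' + i))
    (hword : ∀ i : ℕ, i ≤ ℓ → u (m + i) = v (m' + i)) :
    PPLdiff u (m + ℓ) = PPLdiff v (m' + ℓ) := by
  suffices h : ∀ i ≤ ℓ + 1, (PPL u (m + i) : ℤ) - PPL u m = (PPL v (m' + i) : ℤ) - PPL v m' by
    have := h ℓ (by omega)
    have := h (ℓ + 1) le_rfl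
    simp only [PPLdiff, ← Nat.add_assoc] at *
    omega
  intro i
  induction i using Nat.strong_induction_on with
  | _ i ih =>
    intro hi
    rcases i with _ | k
    · simp
    by_cases hk : k < p
    · have := hd k hk
      have := ih k (by omega) (by omega)
      simp only [PPLdiff, ← Nat.add_assoc] at *
      omega
    · have hagree : ∀ j < k + 1, u (m + j) = v (m' + j) := fun j hj => hword j (by omega)
      have hPPL : ∀ j < k + 1,
          (PPL u (m + j) : ℤ) - PPL u m = (PPL v (m' + j) : ℤ) - PPL v m' :=
        fun j hj => ih j hj (by omega)
      exact le_antisymm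
        (PPL_sub_le_of_agree v hv k.succ_pos (by omega) (fun j hj => (hagree j hj).symm)
          fun j hj => (hPPL j hj).symm)
        (PPL_sub_le_of_agree u hu k.succ_pos (by omega) hagree hPPL)

/-- Let `u` and `v` be infinite words all of whose palindromic factors have length at
most `p`, and let `ℓ ≥ p`. If the PPL-differences agree at `m + i` and `m' + i` for
`0 ≤ i < p`, and `u[m+i] = v[m'+i]` for `0 ≤ i ≤ ℓ`, then
`d_u(m + ℓ) = d_v(m' + ℓ)`. -/
theorem ppl_diff_determined {A : Type*} (u v : ℕ → A) (p : ℕ)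
    (hu : ∀ i ℓ : ℕ, 1 ≤ ℓ → IsPalindrome (wordFactor u i ℓ) → ℓ ≤ p)
    (hv : ∀ i ℓ : ℕ, 1 ≤ ℓ → IsPalindrome (wordFactor v i ℓ) → ℓ ≤ p)
    (m m' ℓ : ℕ) (hℓ : p ≤ ℓ)
    (hd : ∀ i : ℕ, i < p → PPLdiff u (m + i) = PPLdiff v (m' + i))
    (hword : ∀ i : ℕ, i ≤ ℓ → u (m + i) = v (m' + i)) :
    PPLdiff u (m + ℓ) = PPLdiff v (m' + ℓ) :=
  ppl_diff_determined_general u v p hu hv m m' ℓ hd hword
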